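/- arXiv:1008.1987 — 2 statements merged into one kernel-verified Lean document; each statement's English description precedes it below -/
import Mathlib

section
/- Let n ≥ 3 be odd, let F be a field of characteristic ≠ 2, and let L_{n+1} be the simple n-Lie algebra with basis e_1,...,e_{n+1} and bracket [e_1,...,ê_i,...,e_{n+1}] = (-1)^{n+i+1} e_i. If A is an associative algebra and j : L_{n+1} → A is a linear map satisfying j([z_1,...,z_n]) = Σ_{σ∈S_n} ε(σ) j(z_{σ(1)}) ⋯ j(z_{σ(n)}) for all z_1,...,z_n ∈ L_{n+1}, then j(e_1)² + j(e_2)² + ⋯ + j(e_{n+1})² = 0 in A. -/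
/-- The bracket of the simple `n`-Lie algebra `L_{n+1}`: the multilinear extension of
`[e_1, ..., ê_i, ..., e_{n+1}] = (-1)^{n+i+1} e_i` (with `0`-indexed basis vectors the sign
is `(-1)^{n+i}`). -/
noncomputable def simpleBracket (F : Type) [Field F] (n : ℕ)
    (v : Fin n → (Fin (n + 1) → F)) : Fin (n + 1) → F :=
  ∑ i : Fin (n + 1),
    ((-1 : F) ^ (n + (i : ℕ)) *
      Matrix.det (Matrix.of fun k l : Fin n => v k (i.succAbove l))) •
        (Pi.single i 1 : Fin (n + 1) → F)

/-!
Put `x_i = j(e_i)` and let `alt` be the signed sum of products over all orderings. Applying `j`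
to the bracket of the basis vectors other than `e_i` gives `alt(x_1, …, x̂_i, …, x_{n+1}) =
(-1)^{n+i} x_i`. Now expand `alt(x_1, …, x_{n+1})` according to its first letter, as
`∑ (-1)^i x_i alt(…x̂_i…)`, and according to its last letter, as `∑ (-1)^{n+i} alt(…x̂_i…) x_i`.
Since `n` is odd, the first is `-∑ x_i²` and the second is `∑ x_i²`, so `2 ∑ x_i² = 0`.
-/

open Equiv Equiv.Perm Finset

namespace NLie

variable {n : ℕ}

def permCons (i : Fin (n + 1)) (σ : Perm (Fin n)) : Perm (Fin (n + 1)) :=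
  (Fin.cycleRange i)⁻¹ * decomposeFin.symm (0, σ)

@[simp]
theorem permCons_zero (i : Fin (n + 1)) (σ : Perm (Fin n)) : permCons i σ 0 = i := by
  rw [permCons, mul_apply, decomposeFin_symm_apply_zero, inv_eq_iff_eq, Fin.cycleRange_self]

@[simp]
theorem permCons_succ (i : Fin (n + 1)) (σ : Perm (Fin n)) (k : Fin n) :
    permCons i σ k.succ = i.succAbove (σ k) := by
  rw [permCons, mul_apply, decomposeFin_symm_apply_succ, swap_self, refl_apply, inv_eq_iff_eq,
    Fin.cycleRange_succAbove]

theorem sign_permCons (i : Fin (n + 1)) (σ : Perm (Fin n)) :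
    sign (permCons i σ) = (-1) ^ (i : ℕ) * sign σ := by
  simp [permCons, decomposeFin.symm_sign, Fin.sign_cycleRange]

theorem permCons_bijective :
    Function.Bijective fun p : Fin (n + 1) × Perm (Fin n) => permCons p.1 p.2 := by
  refine (Fintype.bijective_iff_injective_and_card _).2 ⟨?_, ?_⟩
  · rintro ⟨i, σ⟩ ⟨i', σ'⟩ h
    obtain rfl : i = i' := by simpa using congr($h 0)
    obtain rfl : σ = σ' := Equiv.ext fun k => by simpa using congr($h k.succ)
    rfl
  · simp [Fintype.card_perm, Nat.factorial_succ]

theorem sum_perm_eq_sum_sum_permCons {M : Type*} [AddCommMonoid M]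
    (f : Perm (Fin (n + 1)) → M) :
    ∑ τ, f τ = ∑ i, ∑ σ, f (permCons i σ) := by
  rw [← Fintype.sum_prod_type']
  exact (Fintype.sum_bijective _ permCons_bijective _ _ fun _ => rfl).symm

variable {B : Type*} [Ring B]

def altProd {m : ℕ} (w : Fin m → B) : B :=
  ∑ σ : Perm (Fin m), (sign σ : ℤ) • (List.ofFn fun k => w (σ k)).prod

theorem altProd_eq_sum_mul_altProd (w : Fin (n + 1) → B) :
    altProd w =
      ∑ i : Fin (n + 1), (-1 : ℤ) ^ (i : ℕ) • (w i * altProd fun k => w (i.succAbove k)) := by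
  rw [altProd, sum_perm_eq_sum_sum_permCons]
  refine sum_congr rfl fun i _ => ?_
  rw [altProd, mul_sum, smul_sum]
  refine sum_congr rfl fun σ _ => ?_
  simp only [List.ofFn_succ, List.prod_cons, permCons_zero, permCons_succ, sign_permCons,
    Units.val_mul, Units.val_pow_eq_pow_val, Units.val_neg, Units.val_one, mul_smul,
    mul_smul_comm]

theorem altProd_eq_sum_altProd_mul (w : Fin (n + 1) → B) :
    altProd w = ∑ i : Fin (n + 1),
      (-1 : ℤ) ^ (n + (i : ℕ)) • ((altProd fun k => w (i.succAbove k)) * w i) := by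
  -- precomposing with the rotation `k ↦ k + 1` turns the first letter of each word into the last
  rw [altProd, ← Equiv.sum_comp (Equiv.mulRight (finRotate (n + 1))),
    sum_perm_eq_sum_sum_permCons]
  refine sum_congr rfl fun i _ => ?_
  rw [altProd, sum_mul, smul_sum]
  refine sum_congr rfl fun σ _ => ?_
  have hword : (List.ofFn fun k => w ((permCons i σ * finRotate (n + 1)) k)) =
      (List.ofFn fun k => w (i.succAbove (σ k))).concat (w i) := by
    rw [List.ofFn_succ', List.concat_eq_append]
    simp [Fin.coeSucc_eq_succ]
  rw [coe_mulRight, hword, List.prod_concat, Perm.sign_mul, sign_permCons, sign_finRotate,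
    smul_mul_assoc, smul_smul]
  congr 1
  push_cast
  ring

theorem two_nsmul_sum_mul_self_eq_zero (hn : Odd n) (x : Fin (n + 1) → B)
    (hx : ∀ i : Fin (n + 1),
      (altProd fun k => x (i.succAbove k)) = (-1 : ℤ) ^ (n + (i : ℕ)) • x i) :
    2 • ∑ i, x i * x i = 0 := by
  have h_first : altProd x = -∑ i, x i * x i := by
    have hodd (i : ℕ) : Odd (i + (n + i)) := by
      rw [add_left_comm]
      exact hn.add_even ⟨i, rfl⟩
    simp only [altProd_eq_sum_mul_altProd, hx, mul_smul_comm, smul_smul, ← pow_add,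
      (hodd _).neg_one_pow, neg_one_smul, sum_neg_distrib]
  have h_last : altProd x = ∑ i, x i * x i := by
    have heven (m : ℕ) : Even (m + m) := ⟨m, rfl⟩
    simp only [altProd_eq_sum_altProd_mul, hx, smul_mul_assoc, smul_smul, ← pow_add,
      (heven _).neg_one_pow, one_smul]
  rw [two_nsmul]
  nth_rw 1 [← h_last, h_first]
  exact neg_add_cancel _

end NLie

open NLie

theorem simpleBracket_single_succAbove (F : Type) [Field F] (n : ℕ) (i : Fin (n + 1)) :
    simpleBracket F n (fun k => Pi.single (i.succAbove k) 1) =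
      (-1 : F) ^ (n + (i : ℕ)) • Pi.single i 1 := by
  rw [simpleBracket, Fintype.sum_eq_single i]
  · have hdet : (Matrix.of fun k l : Fin n =>
        (Pi.single (i.succAbove k) 1 : Fin (n + 1) → F) (i.succAbove l)) = 1 := by
      ext k l
      simp [Matrix.one_apply, Pi.single_apply, eq_comm]
    rw [hdet, Matrix.det_one, mul_one]
  · intro i' hne
    obtain ⟨k₀, hk₀⟩ := Fin.exists_succAbove_eq hne
    have hdet : Matrix.det (Matrix.of fun k l : Fin n =>
        (Pi.single (i.succAbove k) 1 : Fin (n + 1) → F) (i'.succAbove l)) = 0 :=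
      Matrix.det_eq_zero_of_row_eq_zero k₀ fun l => by
        simp [hk₀, Pi.single_apply, Fin.succAbove_ne]
    rw [hdet, mul_zero, zero_smul]

theorem sum_of_squares_eq_zero_odd_general (F : Type) [Field F] (hF : ringChar F ≠ 2)
    (n : ℕ) (hodd : Odd n)
    (A : Type) [Ring A] [Algebra F A] (j : (Fin (n + 1) → F) →ₗ[F] A)
    (hj : ∀ z : Fin n → (Fin (n + 1) → F),
      j (simpleBracket F n z) =
        ∑ σ : Equiv.Perm (Fin n),
          (Equiv.Perm.sign σ : ℤ) • (List.ofFn fun k => j (z (σ k))).prod) :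
    ∑ i : Fin (n + 1), j (Pi.single i 1) * j (Pi.single i 1) = 0 := by
  have hx (i : Fin (n + 1)) : (altProd fun k => j (Pi.single (i.succAbove k) 1)) =
      (-1 : ℤ) ^ (n + (i : ℕ)) • j (Pi.single i 1) := by
    rw [← Int.cast_smul_eq_zsmul F, Int.cast_pow, Int.cast_neg, Int.cast_one, ← map_smul,
      ← simpleBracket_single_succAbove, hj]
    rfl
  have h2 := two_nsmul_sum_mul_self_eq_zero hodd (fun i => j (Pi.single i 1)) hx
  rw [two_nsmul, ← two_smul F, smul_eq_zero] at h2
  exact h2.resolve_left (Ring.two_ne_zero hF)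

/-- For `n` odd, if `j : L_{n+1} → A` is a linear map into an associative algebra
turning the bracket into the `n`-ary alternating sum, then
`j(e_1)² + ⋯ + j(e_{n+1})² = 0`. -/
theorem sum_of_squares_eq_zero_odd (F : Type) [Field F] (hF : ringChar F ≠ 2)
    (n : ℕ) (hn : 3 ≤ n) (hodd : Odd n)
    (A : Type) [Ring A] [Algebra F A] (j : (Fin (n + 1) → F) →ₗ[F] A)
    (hj : ∀ z : Fin n → (Fin (n + 1) → F),
      j (simpleBracket F n z) =
        ∑ σ : Equiv.Perm (Fin n),
          (Equiv.Perm.sign σ : ℤ) • (List.ofFn fun k => j (z (σ k))).prod) :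
    ∑ i : Fin (n + 1), j (Pi.single i 1) * j (Pi.single i 1) = 0 :=
  sum_of_squares_eq_zero_odd_general F hF n hodd A j hj
end

section
/- Let n ≥ 4 be even, F any field, and let L be the (n+1)-dimensional n-Lie algebra with only nonzero bracket [e_1,...,e_n] = e_1 (case (1b)). Then the element N = x_{n+1} x_1 − x_1 x_{n+1} lies in the ideal I of F⟨x_1,...,x_{n+1}⟩ generated by G_i = (-1)^{⌊n/2⌋} alt(x_1,...,x̂_i,...,x_{n+1}) for 1 ≤ i ≤ n, and G_{n+1} = (-1)^{⌊n/2⌋}(alt(x_1,...,x_n) − x_1). Explicitly, N is obtained from G_1 x_1 − x_{n+1} G_{n+1} by reduction modulo G_1,...,G_{n+1}, i.e., x_{n+1}x_1 − x_1x_{n+1} ≡ G_1 x_1 − x_{n+1} G_{n+1} modulo the left-right multiples of G_1,...,G_{n+1} used in the reduction, so in particular N ∈ I. -/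
/-!
Expanding `alt(x_1, …, x_{n+1})` along its first and along its last factor gives
`Σ_i (-1)^{i-1} x_i A_i = Σ_i (-1)^{n+1-i} A_i x_i` with `A_i = alt(x_1, …, x̂_i, …, x_{n+1})`.
For `n` even the two signs agree, so `Σ_i (-1)^{i-1} [x_i, A_i] = 0`. Modulo the ideal `I`
every `A_i` vanishes except `A_{n+1} ≡ x_1`, and the relation collapses to `[x_{n+1}, x_1] ∈ I`.
-/

open FreeAlgebra

/-- The `n`-ary alternating sum in an associative algebra. -/
noncomputable def altSum {A : Type} [Ring A] (n : ℕ) (x : Fin n → A) : A :=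
  ∑ σ : Equiv.Perm (Fin n), (Equiv.Perm.sign σ : ℤ) • (List.ofFn fun k => x (σ k)).prod

namespace Equiv.Perm

def consSuccAbove {n : ℕ} (i : Fin (n + 1)) (τ : Perm (Fin n)) : Perm (Fin (n + 1)) :=
  i.cycleRange.symm * decomposeFin.symm (0, τ)

variable {n : ℕ}

@[simp]
lemma consSuccAbove_zero (i : Fin (n + 1)) (τ : Perm (Fin n)) : consSuccAbove i τ 0 = i := by
  simp [consSuccAbove, mul_apply]

@[simp]
lemma consSuccAbove_succ (i : Fin (n + 1)) (τ : Perm (Fin n)) (k : Fin n) :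
    consSuccAbove i τ k.succ = i.succAbove (τ k) := by
  simp [consSuccAbove, mul_apply, swap_self]

lemma sign_consSuccAbove (i : Fin (n + 1)) (τ : Perm (Fin n)) :
    sign (consSuccAbove i τ) = (-1) ^ (i : ℕ) * sign τ := by
  rw [consSuccAbove, map_mul, decomposeFin.symm_sign, if_pos rfl, one_mul, sign_symm,
    Fin.sign_cycleRange]

lemma bijective_consSuccAbove :
    Function.Bijective fun p : Fin (n + 1) × Perm (Fin n) => consSuccAbove p.1 p.2 := by
  rw [Fintype.bijective_iff_injective_and_card]
  refine ⟨?_, by simp [Fintype.card_perm, Nat.factorial_succ]⟩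
  rintro ⟨i, τ⟩ ⟨i', τ'⟩ h
  obtain rfl : i = i' := by simpa using congrArg (· 0) h
  have := decomposeFin.symm.injective (mul_left_cancel h)
  simp_all

end Equiv.Perm

lemma List.ofFn_comp_rev {α : Type*} {n : ℕ} (f : Fin n → α) :
    (List.ofFn fun k => f k.rev) = (List.ofFn f).reverse := by
  refine List.ext_getElem (by simp) fun i h₁ h₂ => ?_
  simp only [List.getElem_ofFn, List.getElem_reverse, List.length_ofFn]
  congr 1
  ext
  simp only [List.length_ofFn] at h₁
  simp [Fin.rev]
  omega

section AltSum

variable {A : Type} [Ring A]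

open Equiv.Perm in
lemma altSum_succ_eq_sum_mul_left (n : ℕ) (y : Fin (n + 1) → A) :
    altSum (n + 1) y =
      ∑ i : Fin (n + 1), (-1 : ℤ) ^ (i : ℕ) • (y i * altSum n fun k => y (i.succAbove k)) := by
  rw [altSum, ← Fintype.sum_bijective _ bijective_consSuccAbove
    (fun p => (sign (consSuccAbove p.1 p.2) : ℤ) •
      (List.ofFn fun k => y (consSuccAbove p.1 p.2 k)).prod) _ fun _ => rfl,
    Fintype.sum_prod_type]
  refine Finset.sum_congr rfl fun i _ => ?_
  rw [altSum, Finset.mul_sum, Finset.smul_sum]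
  refine Finset.sum_congr rfl fun τ _ => ?_
  rw [sign_consSuccAbove, List.ofFn_succ]
  simp only [consSuccAbove_zero, consSuccAbove_succ, List.prod_cons]
  push_cast
  rw [mul_smul_comm, smul_smul]

lemma altSum_op_comp_rev (n : ℕ) (x : Fin n → A) :
    (altSum n fun k => MulOpposite.op (x k.rev)) = MulOpposite.op (altSum n x) := by
  let conjRev : Equiv.Perm (Fin n) ≃ Equiv.Perm (Fin n) :=
    Equiv.mulRight Fin.revPerm |>.trans (Equiv.mulLeft Fin.revPerm)
  rw [altSum, altSum, Finset.op_sum, ← conjRev.sum_comp]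
  refine Finset.sum_congr rfl fun σ _ => ?_
  have hsign : Equiv.Perm.sign (Fin.revPerm * (σ * Fin.revPerm)) = Equiv.Perm.sign σ := by
    simp only [map_mul]
    rw [mul_left_comm, Int.units_mul_self, mul_one]
  simp only [conjRev, Equiv.trans_apply, Equiv.coe_mulRight, Equiv.coe_mulLeft]
  rw [hsign, MulOpposite.op_smul, MulOpposite.op_list_prod, List.map_ofFn, ← List.ofFn_comp_rev]
  simp [Equiv.Perm.mul_apply]

lemma altSum_succ_eq_sum_mul_right (n : ℕ) (y : Fin (n + 1) → A) :
    altSum (n + 1) y =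
      ∑ i : Fin (n + 1), (-1 : ℤ) ^ (n - i : ℕ) • ((altSum n fun k => y (i.succAbove k)) * y i) := by
  apply MulOpposite.op_injective
  rw [← altSum_op_comp_rev, altSum_succ_eq_sum_mul_left, Finset.op_sum]
  refine Fintype.sum_equiv Fin.revPerm _ _ fun i => ?_
  have hx : (fun k => MulOpposite.op (y (i.succAbove k).rev)) =
      fun k => MulOpposite.op (y (i.rev.succAbove k.rev)) := by
    simp only [Fin.rev_succAbove]
  rw [hx, altSum_op_comp_rev n fun k => y (i.rev.succAbove k)]
  simp only [Fin.revPerm_apply, Fin.val_rev, Nat.add_sub_add_right,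
    Nat.sub_sub_self i.is_le, MulOpposite.op_smul, MulOpposite.op_mul]

lemma Even.sum_neg_one_pow_smul_commutator_altSum {n : ℕ} (hn : Even n) (y : Fin (n + 1) → A) :
    ∑ i : Fin (n + 1), (-1 : ℤ) ^ (i : ℕ) •
      (y i * altSum n (fun k => y (i.succAbove k)) - altSum n (fun k => y (i.succAbove k)) * y i)
      = 0 := by
  have hsign (i : Fin (n + 1)) : (-1 : ℤ) ^ (n - i : ℕ) = (-1) ^ (i : ℕ) := by
    rw [neg_one_pow_eq_pow_mod_two, neg_one_pow_eq_pow_mod_two (i : ℕ)]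
    have := i.is_le
    have := Nat.even_iff.mp hn
    congr 1
    omega
  simp only [smul_sub, Finset.sum_sub_distrib]
  rw [← altSum_succ_eq_sum_mul_left, sub_eq_zero, altSum_succ_eq_sum_mul_right]
  simp only [hsign]

lemma Even.sum_neg_one_pow_smul_commutator_mem {n : ℕ} (hn : Even n) (I : TwoSidedIdeal A)
    (y c : Fin (n + 1) → A) (hc : ∀ i, altSum n (fun k => y (i.succAbove k)) - c i ∈ I) :
    ∑ i : Fin (n + 1), (-1 : ℤ) ^ (i : ℕ) • (y i * c i - c i * y i) ∈ I := by
  rw [← neg_mem_iff, ← zero_add (-_), ← hn.sum_neg_one_pow_smul_commutator_altSum y,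
    ← sub_eq_add_neg, ← Finset.sum_sub_distrib]
  refine sum_mem fun i _ => ?_
  rw [← smul_sub]
  refine I.zsmul_mem _ ?_
  convert I.sub_mem (I.mul_mem_left (y i) _ (hc i)) (I.mul_mem_right _ (y i) (hc i)) using 1
  noncomm_ring

end AltSum

lemma TwoSidedIdeal.mem_span_mul_mul_of_mem_span_range {F R ι : Type*} [CommRing F] [Ring R]
    [Algebra F R] {G : ι → R} {x : R} (hx : x ∈ span (Set.range G)) :
    x ∈ Submodule.span F {z | ∃ (a b : R) (i : ι), z = a * G i * b} := by
  rw [mem_span_iff_mem_addSubgroup_closure] at hx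
  refine (AddSubgroup.closure_le (Submodule.span F _).toAddSubgroup).mpr ?_ hx
  rintro _ ⟨_, ⟨a, -, _, ⟨i, rfl⟩, rfl⟩, b, -, rfl⟩
  exact Submodule.subset_span ⟨a, b, i, rfl⟩

theorem case1b_new_generator_general (F : Type) [Field F]
    (n : ℕ) (heven : Even n)
    (G : Fin (n + 1) → FreeAlgebra F (Fin (n + 1)))
    (hG : ∀ i, i ≠ Fin.last n →
      G i = (-1 : F) ^ (n / 2) • altSum n (fun k => ι F (i.succAbove k)))
    (hGlast : G (Fin.last n) = (-1 : F) ^ (n / 2) •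
      (altSum n (fun k => ι F ((Fin.last n).succAbove k)) - ι F 0)) :
    ((G 0 * ι F 0 - ι F (Fin.last n) * G (Fin.last n)) -
        (ι F (Fin.last n) * ι F 0 - ι F 0 * ι F (Fin.last n)) ∈
      Submodule.span F {z : FreeAlgebra F (Fin (n + 1)) |
        ∃ (a b : FreeAlgebra F (Fin (n + 1))) (i : Fin (n + 1)), z = a * G i * b}) ∧
    (ι F (Fin.last n) * ι F 0 - ι F 0 * ι F (Fin.last n) ∈
      Submodule.span F {z : FreeAlgebra F (Fin (n + 1)) |
        ∃ (a b : FreeAlgebra F (Fin (n + 1))) (i : Fin (n + 1)), z = a * G i * b}) := by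
  set I := TwoSidedIdeal.span (Set.range G)
  have hGI (i : Fin (n + 1)) : G i ∈ I := TwoSidedIdeal.subset_span ⟨i, rfl⟩
  have hs : (-1 : F) ^ (n / 2) * (-1) ^ (n / 2) = 1 := by
    rw [← pow_add]
    exact Even.neg_one_pow ⟨_, rfl⟩
  let c : Fin (n + 1) → FreeAlgebra F (Fin (n + 1)) := Pi.single (Fin.last n) (ι F 0)
  have hc (i : Fin (n + 1)) :
      altSum n (fun k => ι F (i.succAbove k)) - c i = (-1 : F) ^ (n / 2) • G i := by
    by_cases h : i = Fin.last n
    · subst h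
      simp [c, hGlast, smul_smul, hs]
    · simp [c, h, hG i h, smul_smul, hs]
  have hN : ι F (Fin.last n) * ι F 0 - ι F 0 * ι F (Fin.last n) ∈ I := by
    have := heven.sum_neg_one_pow_smul_commutator_mem I (fun k => ι F k) c fun i => by
        rw [hc, Algebra.smul_def]
        exact I.mul_mem_left _ _ (hGI i)
    rw [Fintype.sum_eq_single (Fin.last n) fun i hi => by simp [c, hi]] at this
    simpa [c, heven.neg_one_pow] using this
  have hcomp : (G 0 * ι F 0 - ι F (Fin.last n) * G (Fin.last n)) -
      (ι F (Fin.last n) * ι F 0 - ι F 0 * ι F (Fin.last n)) ∈ I :=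
    I.sub_mem (I.sub_mem (I.mul_mem_right _ _ (hGI 0)) (I.mul_mem_left _ _ (hGI _))) hN
  exact ⟨TwoSidedIdeal.mem_span_mul_mul_of_mem_span_range hcomp,
    TwoSidedIdeal.mem_span_mul_mul_of_mem_span_range hN⟩

/-- Case (1b): for the `n`-Lie algebra with only nonzero bracket `[e_1,...,e_n] = e_1`
(`n ≥ 4` even), the element `N = x_{n+1}x_1 − x_1x_{n+1}` is congruent to the composition
`G_1 x_1 − x_{n+1} G_{n+1}` modulo the two-sided ideal `I = ⟨G_1, ..., G_{n+1}⟩`, and in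
particular `N ∈ I`.  (`0`-indexed: `x_1 ↔ ι F 0`, `x_{n+1} ↔ ι F (Fin.last n)`.) -/
theorem case1b_new_generator (F : Type) [Field F]
    (n : ℕ) (hn : 4 ≤ n) (heven : Even n)
    (G : Fin (n + 1) → FreeAlgebra F (Fin (n + 1)))
    (hG : ∀ i, i ≠ Fin.last n →
      G i = (-1 : F) ^ (n / 2) • altSum n (fun k => ι F (i.succAbove k)))
    (hGlast : G (Fin.last n) = (-1 : F) ^ (n / 2) •
      (altSum n (fun k => ι F ((Fin.last n).succAbove k)) - ι F 0)) :
    ((G 0 * ι F 0 - ι F (Fin.last n) * G (Fin.last n)) -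
        (ι F (Fin.last n) * ι F 0 - ι F 0 * ι F (Fin.last n)) ∈
      Submodule.span F {z : FreeAlgebra F (Fin (n + 1)) |
        ∃ (a b : FreeAlgebra F (Fin (n + 1))) (i : Fin (n + 1)), z = a * G i * b}) ∧
    (ι F (Fin.last n) * ι F 0 - ι F 0 * ι F (Fin.last n) ∈
      Submodule.span F {z : FreeAlgebra F (Fin (n + 1)) |
        ∃ (a b : FreeAlgebra F (Fin (n + 1))) (i : Fin (n + 1)), z = a * G i * b}) :=
  case1b_new_generator_general F n heven G hG hGlast
end
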